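/- Let a := arccos(1/4) and U(x,y) := 3 − sin y − 2·cos(x − y − 4·cos(y − a)) for (x,y) ∈ ℝ². Then both partial derivatives ∂U/∂x(x,y) and ∂U/∂y(x,y) vanish simultaneously if and only if there exist integers k, l such that (x,y) = p + (2πk, 2πl) for some p ∈ { (π/2 + √15, π/2), (5π/2 − √15, 3π/2), (3π/2 − √15, 3π/2), (√15 − π/2, π/2) }. In other words, modulo the lattice 2πℤ², the 2π-biperiodic function U has exactly four critical points: v = (π/2 + √15, π/2), m = (5π/2 − √15, 3π/2), s₁ = (3π/2 − √15, 3π/2), s₂ = (√15 − π/2, π/2). -/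

import Mathlib

/-!
Both partial derivatives are built from the phase `φ = x - y - 4 cos (y - a)`: `∂ₓU = 2 sin φ` and
`∂ᵧU = (4 sin (y - a) - 1) ∂ₓU - cos y`, so `(x, y)` is critical iff `sin φ = 0` and `cos y = 0`.
Then `sin y = ±1` and `4 cos (y - a) = 4 sin y sin a = ±√15`, so `sin φ = 0` fixes `x` modulo `π`
once `y` is fixed modulo `2π`. Working in `Real.Angle = ℝ ⧸ 2πℤ` turns the congruences into equalities.
-/

open Real

/-- The angle `a = arccos(1/4)` from the paper's negative-resistance example. -/
noncomputable def aconst : ℝ := Real.arccos (1 / 4)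

/-- The potential `U(x,y) = 3 − sin y − 2·cos(x − y − 4·cos(y − a))` of the paper's
negative-resistance example on the flat 2-torus. -/
noncomputable def Upot (x y : ℝ) : ℝ :=
  3 - Real.sin y - 2 * Real.cos (x - y - 4 * Real.cos (y - aconst))

namespace Real.Angle

theorem coe_add_two_pi (θ : ℝ) : ((θ + 2 * π : ℝ) : Angle) = θ := by
  rw [coe_add, coe_two_pi, add_zero]

theorem coe_eq_coe_iff_exists_int {x p : ℝ} :
    (x : Angle) = p ↔ ∃ k : ℤ, x = p + 2 * π * k := by
  simp only [angle_eq_iff_two_pi_dvd_sub, sub_eq_iff_eq_add']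

theorem cos_eq_zero_iff_coe_eq {y : ℝ} :
    Real.cos y = 0 ↔ (y : Angle) = ↑(π / 2) ∨ (y : Angle) = ↑(3 * π / 2) := by
  rw [← cos_coe, cos_eq_zero_iff, show 3 * π / 2 = -π / 2 + 2 * π by ring, coe_add_two_pi]

theorem sin_sub_eq_zero_iff {x c : ℝ} :
    Real.sin (x - c) = 0 ↔ (x : Angle) = c ∨ (x : Angle) = ↑(c + π) := by
  rw [← sin_coe, sin_eq_zero_iff, coe_sub, sub_eq_zero, sub_eq_iff_eq_add, coe_add,
    add_comm (π : Angle)]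

end Real.Angle

theorem sin_aconst : sin aconst = √15 / 4 := by
  rw [aconst, sin_arccos, show (1 : ℝ) - (1 / 4) ^ 2 = 15 / 4 ^ 2 by norm_num,
    sqrt_div' _ (by norm_num), sqrt_sq (by norm_num)]

theorem four_mul_cos_sub_aconst {y : ℝ} (hy : cos y = 0) :
    4 * cos (y - aconst) = √15 * sin y := by
  rw [cos_sub, hy, sin_aconst]
  ring

namespace Upot

noncomputable def phase (x y : ℝ) : ℝ := x - y - 4 * cos (y - aconst)

theorem hasDerivAt_fst (x y : ℝ) :
    HasDerivAt (fun x' => Upot x' y) (2 * sin (phase x y)) x :=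
  (((((hasDerivAt_id' x).sub_const y).sub_const (4 * cos (y - aconst))).cos.const_mul 2).const_sub
    (3 - sin y)).congr_deriv (by rw [phase]; ring)

theorem hasDerivAt_snd (x y : ℝ) :
    HasDerivAt (fun y' => Upot x y')
      ((4 * sin (y - aconst) - 1) * (2 * sin (phase x y)) - cos y) y := by
  have hphase : HasDerivAt (fun y' => phase x y') (-1 - 4 * (-sin (y - aconst) * 1)) y :=
    ((hasDerivAt_id' y).const_sub x).sub (((hasDerivAt_id' y).sub_const aconst).cos.const_mul 4)
  exact (((hasDerivAt_sin y).const_sub 3).sub (hphase.cos.const_mul 2)).congr_deriv (by ring)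

theorem deriv_eq_zero_and_deriv_eq_zero_iff (x y : ℝ) :
    (deriv (fun x' => Upot x' y) x = 0 ∧ deriv (fun y' => Upot x y') y = 0) ↔
      (sin (phase x y) = 0 ∧ cos y = 0) := by
  rw [(hasDerivAt_fst x y).deriv, (hasDerivAt_snd x y).deriv]
  constructor
  · rintro ⟨hx, hy⟩
    have hsin : sin (phase x y) = 0 := by linarith
    exact ⟨hsin, by simpa [hsin] using hy⟩
  · rintro ⟨hsin, hcos⟩
    simp [hsin, hcos]

theorem sin_phase_eq_zero_iff {x y y₀ : ℝ} (hy : (y : Angle) = y₀) (hy₀ : cos y₀ = 0) :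
    sin (phase x y) = 0 ↔
      (x : Angle) = ↑(y₀ + √15 * sin y₀) ∨ (x : Angle) = ↑(y₀ + √15 * sin y₀ + π) := by
  have hcos : cos (y - aconst) = cos (y₀ - aconst) := by
    rw [← Angle.cos_coe, Angle.coe_sub, hy, ← Angle.coe_sub, Angle.cos_coe]
  rw [phase, hcos, four_mul_cos_sub_aconst hy₀, sub_sub, Angle.sin_sub_eq_zero_iff]
  simp only [Angle.coe_add, hy]

theorem sin_phase_eq_zero_iff_of_coe_eq_pi_div_two {x y : ℝ} (hy : (y : Angle) = ↑(π / 2)) :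
    sin (phase x y) = 0 ↔ (x : Angle) = ↑(π / 2 + √15) ∨ (x : Angle) = ↑(√15 - π / 2) := by
  rw [sin_phase_eq_zero_iff hy cos_pi_div_two, sin_pi_div_two, mul_one,
    show π / 2 + √15 + π = √15 - π / 2 + 2 * π by ring, Angle.coe_add_two_pi]

theorem sin_phase_eq_zero_iff_of_coe_eq_three_pi_div_two {x y : ℝ}
    (hy : (y : Angle) = ↑(3 * π / 2)) :
    sin (phase x y) = 0 ↔
      (x : Angle) = ↑(3 * π / 2 - √15) ∨ (x : Angle) = ↑(5 * π / 2 - √15) := by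
  have hsin : sin (3 * π / 2) = -1 := by
    rw [show 3 * π / 2 = π / 2 + π by ring, sin_add_pi, sin_pi_div_two]
  have hcos : cos (3 * π / 2) = 0 := by
    rw [show 3 * π / 2 = π / 2 + π by ring, cos_add_pi, cos_pi_div_two, neg_zero]
  rw [sin_phase_eq_zero_iff hy hcos, hsin, mul_neg_one, ← sub_eq_add_neg,
    show 3 * π / 2 - √15 + π = 5 * π / 2 - √15 by ring]

theorem sin_phase_eq_zero_and_cos_eq_zero_iff (x y : ℝ) :
    (sin (phase x y) = 0 ∧ cos y = 0) ↔
      ((x : Angle) = ↑(π / 2 + √15) ∧ (y : Angle) = ↑(π / 2)) ∨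
      ((x : Angle) = ↑(5 * π / 2 - √15) ∧ (y : Angle) = ↑(3 * π / 2)) ∨
      ((x : Angle) = ↑(3 * π / 2 - √15) ∧ (y : Angle) = ↑(3 * π / 2)) ∨
      ((x : Angle) = ↑(√15 - π / 2) ∧ (y : Angle) = ↑(π / 2)) := by
  rw [Angle.cos_eq_zero_iff_coe_eq, and_or_left,
    and_congr_left sin_phase_eq_zero_iff_of_coe_eq_pi_div_two,
    and_congr_left sin_phase_eq_zero_iff_of_coe_eq_three_pi_div_two]
  tauto

end Upot

/-- The 2π-biperiodic potential `U` has, modulo the lattice `2πℤ²`,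
exactly four critical points: `v = (π/2 + √15, π/2)`, `m = (5π/2 − √15, 3π/2)`,
`s₁ = (3π/2 − √15, 3π/2)`, `s₂ = (√15 − π/2, π/2)`. -/
theorem Upot_critical_points (x y : ℝ) :
    (deriv (fun x' => Upot x' y) x = 0 ∧ deriv (fun y' => Upot x y') y = 0) ↔
      ∃ p ∈ ({(π / 2 + Real.sqrt 15, π / 2),
              (5 * π / 2 - Real.sqrt 15, 3 * π / 2),
              (3 * π / 2 - Real.sqrt 15, 3 * π / 2),
              (Real.sqrt 15 - π / 2, π / 2)} : Set (ℝ × ℝ)),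
        ∃ k l : ℤ, x = p.1 + 2 * π * k ∧ y = p.2 + 2 * π * l := by
  rw [Upot.deriv_eq_zero_and_deriv_eq_zero_iff, Upot.sin_phase_eq_zero_and_cos_eq_zero_iff]
  simp only [Set.mem_insert_iff, Set.mem_singleton_iff, exists_eq_or_imp, exists_eq_left,
    exists_and_left, exists_and_right, ← Angle.coe_eq_coe_iff_exists_int]
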